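/- arXiv:quant-ph/0309023 — 4 statements merged into one kernel-verified Lean document; each statement's English description precedes it below -/
import Mathlib

section
/- Let ψ, ψᴰ : ℝ → ℝ be differentiable at q with ψ(q) ≠ 0, let ℓ ∈ ℂ with ψᴰ(q) - i·ℓ·ψ(q) ≠ 0, and let ℏ > 0. Set w = ψᴰ/ψ, β(x) = (w(x) + i·conj(ℓ))/(w(x) - i·ℓ), and let Ω = ψ'(q)ψᴰ(q) - ψ(q)(ψᴰ)'(q) be the Wronskian at q. Then the conjugate momentum p(q) := -(iℏ/2)·β'(q)/β(q) satisfies p(q) = ℏ·(Re ℓ)·Ω / |ψᴰ(q) - i·ℓ·ψ(q)|². -/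
/-! Since `w = ψᴰ/ψ` is real, the numerator of `β = (w + i·conj ℓ)/(w - iℓ)` is the complex
conjugate of its denominator. The logarithmic derivative of this Möbius transform of `w` is
therefore `-2i·(Re ℓ)·w'/|w - iℓ|²`, and the theorem follows from `w' = -Ω/ψ²` and
`|w - iℓ|² = |ψᴰ - iℓψ|²/ψ²`. -/

open Complex ComplexConjugate

theorem logDeriv_add_div_sub {𝕜 𝕜' : Type*} [NontriviallyNormedField 𝕜]
    [NontriviallyNormedField 𝕜'] [NormedAlgebra 𝕜 𝕜'] {f : 𝕜 → 𝕜'} {f' : 𝕜'} {x : 𝕜} (a b : 𝕜')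
    (hf : HasDerivAt f f' x)
    (ha : f x + a ≠ 0) (hb : f x - b ≠ 0) :
    logDeriv (fun y => (f y + a) / (f y - b)) x = -(a + b) * f' / ((f x + a) * (f x - b)) := by
  rw [logDeriv_apply, ((hf.add_const a).fun_div (hf.sub_const b) hb).deriv]
  field_simp
  ring

theorem ofReal_add_I_mul_conj_mul_ofReal_sub_I_mul (w : ℝ) (ℓ : ℂ) :
    ((w : ℂ) + I * conj ℓ) * ((w : ℂ) - I * ℓ) = ((‖(w : ℂ) - I * ℓ‖ ^ 2 : ℝ) : ℂ) := by
  have : conj ((w : ℂ) - I * ℓ) = (w : ℂ) + I * conj ℓ := by simp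
  rw [← this, conj_mul']
  push_cast; rfl

theorem norm_ofReal_div_sub_I_mul_sq (u v : ℝ) (ℓ : ℂ) (hv : v ≠ 0) :
    ‖((u / v : ℝ) : ℂ) - I * ℓ‖ ^ 2 = ‖(u : ℂ) - I * ℓ * v‖ ^ 2 / v ^ 2 := by
  have : (u : ℂ) - I * ℓ * v = (((u / v : ℝ) : ℂ) - I * ℓ) * v := by
    push_cast; rw [sub_mul, div_mul_cancel₀ _ (ofReal_ne_zero.mpr hv)]
  rw [this, norm_mul, norm_real, Real.norm_eq_abs, mul_pow, sq_abs,
    mul_div_cancel_right₀ _ (pow_ne_zero 2 hv)]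

theorem stmt3_general (ψ ψD : ℝ → ℝ) (ψ' ψD' q : ℝ) (ℓ : ℂ) (ℏ : ℝ)
    (hψ : HasDerivAt ψ ψ' q) (hψD : HasDerivAt ψD ψD' q)
    (hψ0 : ψ q ≠ 0)
    (hne : (ψD q : ℂ) - Complex.I * ℓ * (ψ q : ℂ) ≠ 0) :
    -(Complex.I * (ℏ : ℂ) / 2) *
        deriv (fun x : ℝ => (((ψD x / ψ x : ℝ) : ℂ) + Complex.I * (starRingEnd ℂ) ℓ) /
          (((ψD x / ψ x : ℝ) : ℂ) - Complex.I * ℓ)) q /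
        ((((ψD q / ψ q : ℝ) : ℂ) + Complex.I * (starRingEnd ℂ) ℓ) /
          (((ψD q / ψ q : ℝ) : ℂ) - Complex.I * ℓ)) =
      ((ℏ * ℓ.re * (ψ' * ψD q - ψ q * ψD') /
        ‖(ψD q : ℂ) - Complex.I * ℓ * (ψ q : ℂ)‖^2 : ℝ) : ℂ) := by
  have hw : HasDerivAt (fun x => ((ψD x / ψ x : ℝ) : ℂ))
      (((ψD' * ψ q - ψD q * ψ') / ψ q ^ 2 : ℝ) : ℂ) q :=
    (hψD.div hψ hψ0).ofReal_comp
  have hnorm := norm_ofReal_div_sub_I_mul_sq (ψD q) (ψ q) ℓ hψ0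
  have hnorm_ne : ‖(ψD q : ℂ) - I * ℓ * (ψ q : ℂ)‖ ≠ 0 := norm_ne_zero_iff.mpr hne
  have hprod := ofReal_add_I_mul_conj_mul_ofReal_sub_I_mul (ψD q / ψ q) ℓ
  have hprod_ne :
      (((ψD q / ψ q : ℝ) : ℂ) + I * conj ℓ) * (((ψD q / ψ q : ℝ) : ℂ) - I * ℓ) ≠ 0 := by
    rw [hprod, hnorm]
    exact_mod_cast div_ne_zero (pow_ne_zero 2 hnorm_ne) (pow_ne_zero 2 hψ0)
  obtain ⟨hnum, hden⟩ := mul_ne_zero_iff.mp hprod_ne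
  rw [mul_div_assoc, ← logDeriv_apply, logDeriv_add_div_sub _ _ hw hnum hden, hprod, hnorm,
    ← mul_add, add_comm, add_conj]
  generalize ‖(ψD q : ℂ) - I * ℓ * (ψ q : ℂ)‖ = N at hnorm_ne ⊢
  have hN : (N : ℂ) ≠ 0 := ofReal_ne_zero.mpr hnorm_ne
  have hψ0' : (ψ q : ℂ) ≠ 0 := ofReal_ne_zero.mpr hψ0
  push_cast
  field_simp
  rw [I_sq]
  ring

/-- With `w = ψᴰ/ψ`, `β = (w + i·conj ℓ)/(w - iℓ)` and Wronskian
`Ω = ψ'(q)ψᴰ(q) - ψ(q)(ψᴰ)'(q)`, the conjugate momentum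
`p(q) = -(iℏ/2)·β'(q)/β(q)` equals `ℏ·(Re ℓ)·Ω/|ψᴰ(q) - iℓψ(q)|²`. -/
theorem stmt3 (ψ ψD : ℝ → ℝ) (ψ' ψD' q : ℝ) (ℓ : ℂ) (ℏ : ℝ) (hℏ : 0 < ℏ)
    (hψ : HasDerivAt ψ ψ' q) (hψD : HasDerivAt ψD ψD' q)
    (hψ0 : ψ q ≠ 0)
    (hne : (ψD q : ℂ) - Complex.I * ℓ * (ψ q : ℂ) ≠ 0) :
    -(Complex.I * (ℏ : ℂ) / 2) *
        deriv (fun x : ℝ => (((ψD x / ψ x : ℝ) : ℂ) + Complex.I * (starRingEnd ℂ) ℓ) /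
          (((ψD x / ψ x : ℝ) : ℂ) - Complex.I * ℓ)) q /
        ((((ψD q / ψ q : ℝ) : ℂ) + Complex.I * (starRingEnd ℂ) ℓ) /
          (((ψD q / ψ q : ℝ) : ℂ) - Complex.I * ℓ)) =
      ((ℏ * ℓ.re * (ψ' * ψD q - ψ q * ψD') /
        ‖(ψD q : ℂ) - Complex.I * ℓ * (ψ q : ℂ)‖^2 : ℝ) : ℂ) :=
  stmt3_general ψ ψD ψ' ψD' q ℓ ℏ hψ hψD hψ0 hne
end

section
/- Let ε ∈ ℂ with ε ≠ 0, let V : ℝ → ℂ be continuous, E ∈ ℂ, and let ψ, ψᴰ : ℝ → ℂ be twice-differentiable solutions of ε²f'' = (V - E)f on ℝ whose Wronskian satisfies ψ'(X)ψᴰ(X) - ψ(X)(ψᴰ)'(X) = 2i/ε for all X. Suppose ψ'(X) ≠ 0 for all X in an interval I. Define on I: 𝔉₁ = ψᴰ, 𝔉₂ = (ψᴰ)'/ψ', and 𝔉₃ = 𝔉₂'/ψ' (the first, second, and third derivatives of the prepotential 𝔉 with respect to ψ, computed via the chain rule d/dψ = (1/ψ')d/dX). Then for all X ∈ I: 𝔉₃(X)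 = ((E - V(X))/4)·(𝔉₁(X) - ψ(X)·𝔉₂(X))³. -/
open Complex

/-- equation (A21): with `ψ, ψᴰ` solutions of `ε²f'' = (V - E)f`
whose Wronskian equals `2i/ε`, the prepotential derivatives `𝔉₁ = ψᴰ`,
`𝔉₂ = (ψᴰ)'/ψ'`, `𝔉₃ = 𝔉₂'/ψ'` satisfy
`𝔉₃ = ((E - V)/4)·(𝔉₁ - ψ·𝔉₂)³` on any interval where `ψ' ≠ 0`. -/
theorem stmt7 (ε : ℂ) (hε : ε ≠ 0) (V : ℝ → ℂ) (hV : Continuous V) (E : ℂ)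
    (ψ ψ' ψ'' ψD ψD' ψD'' : ℝ → ℂ)
    (hψ1 : ∀ X, HasDerivAt ψ (ψ' X) X) (hψ2 : ∀ X, HasDerivAt ψ' (ψ'' X) X)
    (hψeq : ∀ X, ε ^ 2 * ψ'' X = (V X - E) * ψ X)
    (hD1 : ∀ X, HasDerivAt ψD (ψD' X) X) (hD2 : ∀ X, HasDerivAt ψD' (ψD'' X) X)
    (hDeq : ∀ X, ε ^ 2 * ψD'' X = (V X - E) * ψD X)
    (hW : ∀ X, ψ' X * ψD X - ψ X * ψD' X = 2 * Complex.I / ε)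
    (Iset : Set ℝ) (hIset : Iset.OrdConnected)
    (hne : ∀ X ∈ Iset, ψ' X ≠ 0) :
    ∀ X ∈ Iset,
      deriv (fun Y => ψD' Y / ψ' Y) X / ψ' X =
        ((E - V X) / 4) * (ψD X - ψ X * (ψD' X / ψ' X)) ^ 3 := by
  intro X hX
  have hne' := hne X hX
  have hd : HasDerivAt (fun Y => ψD' Y / ψ' Y)
      ((ψD'' X * ψ' X - ψD' X * ψ'' X) / ψ' X ^ 2) X :=
    (hD2 X).div (hψ2 X) hne'
  rw [hd.deriv]
  have h1 := hψeq X
  have h2 := hDeq X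
  have h3 := hW X
  have hε2 : ε ^ 2 ≠ 0 := pow_ne_zero 2 hε
  have k1 : ε ^ 2 * (ψD'' X * ψ' X - ψD' X * ψ'' X)
      = (V X - E) * (ψD X * ψ' X - ψ X * ψD' X) := by
    linear_combination ψ' X * h2 - ψD' X * h1
  have k2 : (ψ' X * ψD X - ψ X * ψD' X) ^ 2 * ε ^ 2 = -4 := by
    rw [h3]
    field_simp
    linear_combination (4 : ℂ) * Complex.I_sq
  have goal2 : ε ^ 2 * (4 * (ψD'' X * ψ' X - ψD' X * ψ'' X))
      = ε ^ 2 * ((E - V X) * (ψ' X * ψD X - ψ X * ψD' X) ^ 3) := by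
    linear_combination 4 * k1 - (E - V X) * (ψ' X * ψD X - ψ X * ψD' X) * k2
  have goal' := mul_left_cancel₀ hε2 goal2
  field_simp
  linear_combination goal'
end

section
/- Let ε ≠ 0 be real, V : ℝ → ℝ, E ∈ ℝ, let R : ℝ → ℝ be twice differentiable and s : ℝ → ℝ three times differentiable, with R(X) ≠ 0 and s'(X) ≠ 0 for all X. If ψ := R·e^{is/ε} satisfies ε²ψ'' = (V - E)ψ on ℝ, then s satisfies the quantum stationary Hamilton–Jacobi equation (s'(X))² + V(X) - E + (ε²/2)·(s'''(X)/s'(X) - (3/2)(s''(X)/s'(X))²) = 0 for all X ∈ ℝ. -/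
open Complex

/-- the QSHJE (A31): if `ψ = R·e^{is/ε}` solves
`ε²ψ'' = (V - E)ψ` with `R ≠ 0`, `s' ≠ 0`, then
`(s')² + V - E + (ε²/2)(s'''/s' - (3/2)(s''/s')²) = 0`. -/
theorem stmt13 (ε : ℝ) (hε : ε ≠ 0) (V : ℝ → ℝ) (E : ℝ)
    (R R' R'' s s' s'' s''' : ℝ → ℝ)
    (hR1 : ∀ X, HasDerivAt R (R' X) X) (hR2 : ∀ X, HasDerivAt R' (R'' X) X)
    (hs1 : ∀ X, HasDerivAt s (s' X) X) (hs2 : ∀ X, HasDerivAt s' (s'' X) X)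
    (hs3 : ∀ X, HasDerivAt s'' (s''' X) X)
    (hR0 : ∀ X, R X ≠ 0) (hs0 : ∀ X, s' X ≠ 0)
    (ψ : ℝ → ℂ)
    (hψ : ψ = fun X : ℝ => (R X : ℂ) * Complex.exp (Complex.I * (s X : ℂ) / (ε : ℂ)))
    (hSE : ∀ X, (ε : ℂ) ^ 2 * iteratedDeriv 2 ψ X = ((V X : ℂ) - (E : ℂ)) * ψ X) :
    ∀ X,
      (s' X) ^ 2 + V X - E +
        (ε ^ 2 / 2) * (s''' X / s' X - (3 / 2) * (s'' X / s' X) ^ 2) = 0 := by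
  have hεC : (ε : ℂ) ≠ 0 := Complex.ofReal_ne_zero.mpr hε
  have he : ∀ X, HasDerivAt (fun X : ℝ => Complex.exp (Complex.I * (s X : ℂ) / (ε : ℂ)))
      (Complex.I * (s' X : ℂ) / ε * Complex.exp (Complex.I * (s X : ℂ) / (ε : ℂ))) X := by
    intro X
    have h1 : HasDerivAt (fun X : ℝ => Complex.I * (s X : ℂ) / (ε : ℂ))
        (Complex.I * (s' X : ℂ) / ε) X := by
      simpa [mul_div_assoc] using ((hs1 X).ofReal_comp.const_mul Complex.I).div_const (ε : ℂ)
    simpa [mul_comm] using h1.cexp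
  have hd1 : ∀ X, HasDerivAt ψ
      (((R' X : ℂ) + Complex.I * R X * s' X / ε)
        * Complex.exp (Complex.I * (s X : ℂ) / (ε : ℂ))) X := by
    intro X
    rw [hψ]
    have h := (hR1 X).ofReal_comp.mul (he X)
    convert h using 1
    · rfl
    · rfl
    ring
  have hd2 : ∀ X, HasDerivAt
      (fun X => ((R' X : ℂ) + Complex.I * R X * s' X / ε)
        * Complex.exp (Complex.I * (s X : ℂ) / (ε : ℂ)))
      (((R'' X : ℂ) + Complex.I * (2 * R' X * s' X + R X * s'' X) / ε
        - R X * (s' X : ℂ) ^ 2 / ε ^ 2)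
        * Complex.exp (Complex.I * (s X : ℂ) / (ε : ℂ))) X := by
    intro X
    have hg : HasDerivAt (fun X : ℝ => (R' X : ℂ) + Complex.I * R X * s' X / ε)
        ((R'' X : ℂ) + Complex.I * ((R' X : ℂ) * s' X + R X * s'' X) / ε) X := by
      have h1 : HasDerivAt (fun X : ℝ => Complex.I * (R X : ℂ) * (s' X : ℂ) / ε)
          (Complex.I * ((R' X : ℂ) * s' X + R X * s'' X) / ε) X := by
        have h2 := (((hR1 X).ofReal_comp.mul (hs2 X).ofReal_comp).const_mul
          Complex.I).div_const (ε : ℂ)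
        convert h2 using 1
        · rfl
        funext Y; simp only [Pi.mul_apply]; ring
      exact (hR2 X).ofReal_comp.add h1
    have h := hg.mul (he X)
    convert h using 1
    · rfl
    · rfl
    linear_combination (-(R X : ℂ) * (s' X : ℂ) ^ 2 / (ε : ℂ) ^ 2
      * Complex.exp (Complex.I * (s X : ℂ) / (ε : ℂ))) * Complex.I_mul_I
  have hderiv2 : ∀ X, iteratedDeriv 2 ψ X =
      ((R'' X : ℂ) + Complex.I * (2 * R' X * s' X + R X * s'' X) / ε
        - R X * (s' X : ℂ) ^ 2 / ε ^ 2)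
        * Complex.exp (Complex.I * (s X : ℂ) / (ε : ℂ)) := by
    intro X
    rw [show (2 : ℕ) = 0 + 1 + 1 by rfl, iteratedDeriv_succ, iteratedDeriv_succ,
      iteratedDeriv_zero, funext fun Y => (hd1 Y).deriv]
    exact (hd2 X).deriv
  have key : ∀ X, ε ^ 2 * R'' X - R X * (s' X) ^ 2 = (V X - E) * R X ∧
      2 * R' X * s' X + R X * s'' X = 0 := by
    intro X
    have h := hSE X
    rw [hderiv2, hψ] at h
    have h2 : (ε : ℂ) ^ 2 * ((R'' X : ℂ) + Complex.I * (2 * R' X * s' X + R X * s'' X) / ε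
        - R X * (s' X : ℂ) ^ 2 / ε ^ 2) = ((V X : ℂ) - E) * R X := by
      apply mul_right_cancel₀ (Complex.exp_ne_zero (Complex.I * (s X : ℂ) / (ε : ℂ)))
      linear_combination h
    have h2' : (ε : ℂ) ^ 2 * (R'' X : ℂ)
        + (ε : ℂ) * (2 * (R' X : ℂ) * (s' X : ℂ) + (R X : ℂ) * (s'' X : ℂ)) * Complex.I
        - (R X : ℂ) * (s' X : ℂ) ^ 2 = ((V X : ℂ) - E) * (R X : ℂ) := by
      field_simp at h2
      apply mul_left_cancel₀ (pow_ne_zero 3 hεC)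
      linear_combination (ε : ℂ) ^ 3 * h2
    have h3 : ((ε ^ 2 * R'' X - R X * (s' X) ^ 2 - (V X - E) * R X : ℝ) : ℂ)
        + ((ε * (2 * R' X * s' X + R X * s'' X) : ℝ) : ℂ) * Complex.I = 0 := by
      push_cast
      linear_combination h2'
    rw [Complex.ext_iff] at h3
    simp only [Complex.add_re, Complex.ofReal_re, Complex.mul_re, Complex.I_re, Complex.I_im,
      Complex.ofReal_im, Complex.add_im, Complex.mul_im, Complex.zero_re, Complex.zero_im] at h3
    obtain ⟨ha, hb⟩ := h3
    have hb' : ε * (2 * R' X * s' X + R X * s'' X) = 0 := by linarith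
    constructor
    · linarith
    · exact (mul_eq_zero.mp hb').resolve_left hε
  have key3 : ∀ X, 2 * R'' X * s' X + 3 * R' X * s'' X + R X * s''' X = 0 := by
    intro X
    have hf : HasDerivAt (fun X => 2 * R' X * s' X + R X * s'' X)
        (2 * R'' X * s' X + 3 * R' X * s'' X + R X * s''' X) X := by
      have h1 := ((hR2 X).const_mul 2).mul (hs2 X)
      have h2 := (hR1 X).mul (hs3 X)
      convert h1.add h2 using 1
      · rfl
      · rfl
      · rfl
      ring
    have hzero : (fun X => 2 * R' X * s' X + R X * s'' X) = fun _ => (0 : ℝ) :=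
      funext fun X => (key X).2
    rw [hzero] at hf
    exact hf.unique (hasDerivAt_const X 0)
  intro X
  have eq1 := (key X).1
  have eq2 := (key X).2
  have eq3 := key3 X
  have hs := hs0 X
  have hR := hR0 X
  have main : R X * (2 * (s' X) ^ 4 + 2 * (V X - E) * (s' X) ^ 2 + ε ^ 2 * s' X * s''' X
      - (3 / 2) * ε ^ 2 * (s'' X) ^ 2) = 0 := by
    linear_combination (-2 * (s' X) ^ 2) * eq1 + (ε ^ 2 * s' X) * eq3
      - (3 / 2 * ε ^ 2 * s'' X) * eq2
  have main2 := (mul_eq_zero.mp main).resolve_left hR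
  field_simp
  linear_combination 2 * main2
end

section
/- Let P₀, P₁, P₂ : ℝ → ℝ with P₀ twice differentiable, P₁ differentiable, and P₀(X) ≠ 0 for all X, and suppose 2P₀P₁ + P₀' = 0 and P₁² + 2P₀P₂ + P₁' = 0 on ℝ. Then P₂(X) = (1/(4P₀(X)))·(P₀''(X)/P₀(X) - (3/2)·(P₀'(X)/P₀(X))²) for all X ∈ ℝ. -/
/-- (A48): from `2P₀P₁ + P₀' = 0` and `P₁² + 2P₀P₂ + P₁' = 0`
with `P₀ ≠ 0` one gets `P₂ = (1/(4P₀))(P₀''/P₀ - (3/2)(P₀'/P₀)²)`. -/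
theorem stmt17 (P₀ P₀' P₀'' P₁ P₁' P₂ : ℝ → ℝ)
    (hP01 : ∀ X, HasDerivAt P₀ (P₀' X) X) (hP02 : ∀ X, HasDerivAt P₀' (P₀'' X) X)
    (hP11 : ∀ X, HasDerivAt P₁ (P₁' X) X)
    (hP0ne : ∀ X, P₀ X ≠ 0)
    (heq1 : ∀ X, 2 * P₀ X * P₁ X + P₀' X = 0)
    (heq2 : ∀ X, (P₁ X) ^ 2 + 2 * P₀ X * P₂ X + P₁' X = 0) :
    ∀ X, P₂ X =
      (1 / (4 * P₀ X)) * (P₀'' X / P₀ X - (3 / 2) * (P₀' X / P₀ X) ^ 2) := by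
  intro X
  -- derivative of the identity heq1
  have hD : HasDerivAt (fun X => 2 * P₀ X * P₁ X + P₀' X)
      (2 * (P₀' X * P₁ X + P₀ X * P₁' X) + P₀'' X) X := by
    have := (((hP01 X).const_mul 2).mul (hP11 X)).add (hP02 X)
    refine this.congr_deriv ?_
    ring
  have hzero : HasDerivAt (fun _ : ℝ => (0 : ℝ)) 0 X := hasDerivAt_const X 0
  have hD0 : 2 * (P₀' X * P₁ X + P₀ X * P₁' X) + P₀'' X = 0 := by
    have heq : (fun X => 2 * P₀ X * P₁ X + P₀' X) = fun _ : ℝ => (0 : ℝ) := by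
      funext Y; exact heq1 Y
    rw [heq] at hD
    exact hD.unique hzero
  have h1 := heq1 X
  have h2 := heq2 X
  have h0 := hP0ne X
  field_simp
  linear_combination (-(2*P₀ X))*hD0 + (3*P₀' X - 2*P₀ X*P₁ X)*h1 + (4*P₀ X^2)*h2
end
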